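/- Let γ > 0, η > 0, L_R > 0, L_h > 0, M₂ > 0, X ∈ St(d,r), v ∈ ℝ^{d×r}, ζ ∈ T_X, f : ℝ^{d×r} → ℝ differentiable, h : ℝ^{d×r} → ℝ convex and L_h-Lipschitz, F = f + h, and φ(ζ') = ⟨v, ζ'⟩ + (1/(2γ))‖ζ'‖² + h(X + ζ'). Set X' = Retr_X(ηζ), where Retr is the polar retraction. If f(X') ≤ f(X) + η⟨∇f(X), ζ⟩ + (L_R η²/2)‖ζ‖² and ‖X' − (X + ηζ)‖ ≤ M₂ η² ‖ζ‖², then F(X') − F(X) ≤ (L_R η²/2 − η²/(2γ) + L_h M₂ η² + 1/2)‖ζ‖² + (η²/2)‖∇f(X) − v‖² + φ(ηζ) − φ(0). -/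

import Mathlib

open Matrix MeasureTheory Finset

noncomputable section

/-- The space of real `d × r` matrices. -/
abbrev Mat (d r : ℕ) := Matrix (Fin d) (Fin r) ℝ

/-- The Frobenius inner product `⟨A, B⟩ = tr(Aᵀ B)`. -/
def finner {d r : ℕ} (A B : Mat d r) : ℝ := (Aᵀ * B).trace

/-- The Stiefel manifold `St(d,r) = {X : Xᵀ X = I}`. -/
def Stiefel {d r : ℕ} (X : Mat d r) : Prop := Xᵀ * X = 1

/-- The tangent space to the Stiefel manifold at `X`:
`T_X = {ζ : ζᵀ X + Xᵀ ζ = 0}`. -/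
def TangentAt {d r : ℕ} (X : Mat d r) : Set (Mat d r) :=
  {ζ | ζᵀ * X + Xᵀ * ζ = 0}

lemma posSemidef_one_add_transpose_mul_self {d r : ℕ} (ξ : Mat d r) :
    (1 + ξᵀ * ξ).PosSemidef := by
  have h := Matrix.posSemidef_conjTranspose_mul_self ξ
  rw [Matrix.conjTranspose_eq_transpose_of_trivial] at h
  exact Matrix.PosSemidef.one.add h

/-- The square root of a positive-semidefinite matrix, as `Matrix.PosSemidef.sqrt` was defined
in the older Mathlib (eigen-decomposition; since removed in favour of `CFC.sqrt`). -/
def posSemidefSqrtOld {n : ℕ} {A : Matrix (Fin n) (Fin n) ℝ} (hA : A.PosSemidef) :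
    Matrix (Fin n) (Fin n) ℝ :=
  (hA.1.eigenvectorUnitary : Matrix (Fin n) (Fin n) ℝ) *
    diagonal (Real.sqrt ∘ hA.1.eigenvalues) *
    (star hA.1.eigenvectorUnitary : Matrix (Fin n) (Fin n) ℝ)

/-- The polar retraction `Retr_X(ξ) = (X + ξ)(I + ξᵀ ξ)^{-1/2}`, where the square root
is the unique positive-semidefinite (here positive-definite) square root. -/
def polarRetr {d r : ℕ} (X ξ : Mat d r) : Mat d r :=
  (X + ξ) * (posSemidefSqrtOld (posSemidef_one_add_transpose_mul_self ξ))⁻¹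

/- Equip matrices with the Frobenius norm (the norm induced by `finner`). -/
attribute [local instance] Matrix.frobeniusNormedAddCommGroup Matrix.frobeniusNormedSpace

/-- The subproblem objective `φ(ζ) = ⟨v, ζ⟩ + (1/(2γ))‖ζ‖² + h(X + ζ)`. -/
def phi {d r : ℕ} (γ : ℝ) (h : Mat d r → ℝ) (X v ζ : Mat d r) : ℝ :=
  finner v ζ + (1 / (2 * γ)) * ‖ζ‖ ^ 2 + h (X + ζ)

/-- `ζ` is a minimizer of `phi γ h X v` over the tangent space at `X`. -/
def IsSubMin {d r : ℕ} (γ : ℝ) (h : Mat d r → ℝ) (X v ζ : Mat d r) : Prop :=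
  ζ ∈ TangentAt X ∧ ∀ ζ' ∈ TangentAt X, phi γ h X v ζ ≤ phi γ h X v ζ'

lemma finner_eq_sum {d r : ℕ} (A B : Mat d r) :
    finner A B = ∑ p : Fin r × Fin d, A p.2 p.1 * B p.2 p.1 := by
  simp [finner, Matrix.trace, Matrix.diag, Matrix.mul_apply, Fintype.sum_prod_type,
    Matrix.transpose_apply]

lemma frob_norm_sq {d r : ℕ} (A : Mat d r) :
    ‖A‖ ^ 2 = ∑ p : Fin r × Fin d, (A p.2 p.1) ^ 2 := by
  rw [Matrix.frobenius_norm_def]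
  rw [← Real.rpow_natCast _ 2, ← Real.rpow_mul (by positivity)]
  norm_num
  rw [Finset.sum_comm, Fintype.sum_prod_type]

lemma finner_cs {d r : ℕ} (A B : Mat d r) :
    (finner A B) ^ 2 ≤ ‖A‖ ^ 2 * ‖B‖ ^ 2 := by
  rw [finner_eq_sum, frob_norm_sq, frob_norm_sq]
  exact Finset.sum_mul_sq_le_sq_mul_sq _ _ _

/-- under retraction-smoothness of `f` along `ηζ`, Lipschitzness of `h`, and the
second-order retraction bound, `F(X') − F(X) ≤ (L_R η²/2 − η²/(2γ) + L_h M₂ η² + 1/2)‖ζ‖²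
  + (η²/2)‖∇f(X) − v‖² + φ(ηζ) − φ(0)`, where `X' = Retr_X(ηζ)`. -/
theorem one_step_descent_lipschitz {d r : ℕ} (γ η L_R L_h M₂ : ℝ)
    (hγ : 0 < γ) (hη : 0 < η) (hLR : 0 < L_R) (hLh : 0 < L_h) (hM₂ : 0 < M₂)
    (X : Mat d r) (hX : Stiefel X) (v : Mat d r)
    (ζ : Mat d r) (hζ : ζ ∈ TangentAt X)
    (f h : Mat d r → ℝ) (hconv : ConvexOn ℝ Set.univ h)
    (hlip : ∀ A B : Mat d r, |h A - h B| ≤ L_h * ‖A - B‖)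
    (hdiff : Differentiable ℝ f)
    (Gf : Mat d r) (hgrad : ∀ u : Mat d r, (fderiv ℝ f X) u = finner Gf u)
    (hsmooth : f (polarRetr X (η • ζ)) ≤
      f X + η * finner Gf ζ + (L_R * η ^ 2 / 2) * ‖ζ‖ ^ 2)
    (hretr2 : ‖polarRetr X (η • ζ) - (X + η • ζ)‖ ≤ M₂ * η ^ 2 * ‖ζ‖ ^ 2) :
    (f (polarRetr X (η • ζ)) + h (polarRetr X (η • ζ))) - (f X + h X) ≤
      (L_R * η ^ 2 / 2 - η ^ 2 / (2 * γ) + L_h * M₂ * η ^ 2 + 1 / 2) * ‖ζ‖ ^ 2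
        + (η ^ 2 / 2) * ‖Gf - v‖ ^ 2
        + (phi γ h X v (η • ζ) - phi γ h X v 0) := by
  set X' := polarRetr X (η • ζ) with hX'
  have hB : (0:ℝ) ≤ ‖ζ‖ ^ 2 := by positivity
  have hA : (0:ℝ) ≤ ‖Gf - v‖ ^ 2 := by positivity
  -- Young / Cauchy-Schwarz
  have hcs := finner_cs (Gf - v) ζ
  have hS : finner (Gf - v) ζ ≤ ‖Gf - v‖ * ‖ζ‖ := by
    nlinarith [hcs, mul_nonneg (norm_nonneg (Gf - v)) (norm_nonneg ζ)]
  have key : η * finner (Gf - v) ζ ≤ (1/2) * ‖ζ‖ ^ 2 + (η ^ 2 / 2) * ‖Gf - v‖ ^ 2 := by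
    have h1 : η * finner (Gf - v) ζ ≤ η * (‖Gf - v‖ * ‖ζ‖) :=
      mul_le_mul_of_nonneg_left hS hη.le
    nlinarith [sq_nonneg (η * ‖Gf - v‖ - ‖ζ‖)]
  have hfs : finner (Gf - v) ζ = finner Gf ζ - finner v ζ := by
    simp [finner_eq_sum, Matrix.sub_apply, sub_mul, Finset.sum_sub_distrib]
  -- h bound
  have hh : h X' - h (X + η • ζ) ≤ L_h * (M₂ * η ^ 2 * ‖ζ‖ ^ 2) := by
    have h1 := hlip X' (X + η • ζ)
    have h2 : L_h * ‖X' - (X + η • ζ)‖ ≤ L_h * (M₂ * η ^ 2 * ‖ζ‖ ^ 2) :=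
      mul_le_mul_of_nonneg_left hretr2 hLh.le
    calc h X' - h (X + η • ζ) ≤ |h X' - h (X + η • ζ)| := le_abs_self _
      _ ≤ L_h * ‖X' - (X + η • ζ)‖ := h1
      _ ≤ _ := h2
  -- phi values
  have hns : ‖η • ζ‖ ^ 2 = η ^ 2 * ‖ζ‖ ^ 2 := by
    rw [norm_smul]; simp [mul_pow, sq_abs, Real.norm_eq_abs]
  have hfin0 : finner v (0 : Mat d r) = 0 := by simp [finner_eq_sum]
  have hfinsmul : finner v (η • ζ) = η * finner v ζ := by
    simp only [finner_eq_sum, Matrix.smul_apply, Finset.mul_sum, smul_eq_mul]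
    exact Finset.sum_congr rfl fun i _ => by ring
  have hphi : phi γ h X v (η • ζ) - phi γ h X v 0 =
      η * finner v ζ + (1 / (2 * γ)) * (η ^ 2 * ‖ζ‖ ^ 2) + h (X + η • ζ) - h X := by
    simp only [phi, hfin0, hfinsmul, hns, norm_zero, add_zero]
    ring_nf
  rw [hphi]
  have hγne : γ ≠ 0 := ne_of_gt hγ
  have hgcancel : η ^ 2 / (2 * γ) * ‖ζ‖ ^ 2 = (1 / (2 * γ)) * (η ^ 2 * ‖ζ‖ ^ 2) := by
    field_simp
  nlinarith [key, hsmooth, hh, hfs, hgcancel]
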